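/- Let ψ solve on [x₀, ∞) the Volterra integral equation ψ(x) = g(x) + ∫ₓ^∞ K(x,y) ψ(y) dy, where |g(x)| ≤ A and |K(x,y)| ≤ h(y) for all x₀ ≤ x ≤ y with h : ℝ → [0,∞) integrable on [x₀,∞). If ψ is bounded and measurable, then |ψ(x)| ≤ A · exp(∫ₓ^∞ h(y) dy) for all x ≥ x₀. -/

import Mathlib

/-!
Write `H x = ∫_{(x,∞)} h`. Fubini on the triangle `x < y < z` gives
`∫_{(x,∞)} h H^n = H(x)^(n+1) / (n+1)`, and summing the exponential series,
`∫_{(x,∞)} h e^H = e^{H(x)} - 1`, i.e. `A e^H` solves `u = A + ∫_{(x,∞)} h u`.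
The difference `v = ‖ψ‖ - A e^H` is bounded above by some `C` and satisfies
`v(x) ≤ ∫_{(x,∞)} h v`; iterating gives `v ≤ C H^n / n!` for every `n`, hence `v ≤ 0`.
-/

open MeasureTheory Complex Set
open scoped Nat

noncomputable def tailIntegral (h : ℝ → ℝ) (x : ℝ) : ℝ := ∫ y in Ioi x, h y

section

variable {h : ℝ → ℝ} {x : ℝ}

lemma abs_tailIntegral_le (hh : IntegrableOn h (Ioi x)) {y : ℝ} (hy : x ≤ y) :
    |tailIntegral h y| ≤ ∫ z in Ioi x, |h z| :=
  abs_integral_le_integral_abs.trans <| setIntegral_mono_set hh.abs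
    (ae_of_all _ fun _ => abs_nonneg _) (Ioi_subset_Ioi hy).eventuallyLE

lemma integrableOn_mul_comp_tailIntegral (hh : IntegrableOn h (Ioi x)) {F : ℝ → ℝ}
    (hF : Continuous F) :
    IntegrableOn (fun y => h y * F (tailIntegral h y)) (Ioi x) := by
  set M := ∫ z in Ioi x, |h z|
  obtain ⟨C, hC⟩ := (isCompact_Icc (a := -M) (b := M)).exists_bound_of_continuousOn
    hF.continuousOn
  have hcont : ContinuousOn (F ∘ tailIntegral h) (Ioi x) :=
    hF.comp_continuousOn ((hh.continuousOn_Ici_primitive_Ioi).mono Ioi_subset_Ici_self)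
  refine hh.mul_bdd (hcont.aestronglyMeasurable measurableSet_Ioi) (c := C) ?_
  filter_upwards [ae_restrict_mem measurableSet_Ioi] with y hy
  exact hC _ (_root_.abs_le.mp (abs_tailIntegral_le hh (le_of_lt hy)))

lemma integral_mul_tailIntegral {f g : ℝ → ℝ}
    (hf : IntegrableOn f (Ioi x)) (hg : IntegrableOn g (Ioi x)) :
    ∫ y in Ioi x, f y * tailIntegral g y = ∫ z in Ioi x, g z * ∫ y in x..z, f y := by
  set F : ℝ × ℝ → ℝ := {p | p.1 < p.2}.indicator fun p => f p.1 * g p.2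
  have hF : Integrable F ((volume.restrict (Ioi x)).prod (volume.restrict (Ioi x))) :=
    (hf.mul_prod hg).indicator (measurableSet_lt measurable_fst measurable_snd)
  have hleft : ∀ y, (fun z => F (y, z)) = (Ioi y).indicator fun z => f y * g z := by
    intro y; ext z; by_cases hyz : y < z <;> simp [F, hyz]
  have hright : ∀ z, (fun y => F (y, z)) = (Iio z).indicator fun y => f y * g z := by
    intro z; ext y; by_cases hyz : y < z <;> simp [F, hyz]
  calc ∫ y in Ioi x, f y * tailIntegral g y
      = ∫ y in Ioi x, ∫ z in Ioi x, F (y, z) := by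
        refine setIntegral_congr_fun measurableSet_Ioi fun y (hy : x < y) => ?_
        rw [hleft, setIntegral_indicator measurableSet_Ioi, Ioi_inter_Ioi,
          max_eq_right hy.le, integral_const_mul, tailIntegral]
    _ = ∫ z in Ioi x, ∫ y in Ioi x, F (y, z) := integral_integral_swap hF
    _ = ∫ z in Ioi x, g z * ∫ y in x..z, f y := by
        refine setIntegral_congr_fun measurableSet_Ioi fun z (hz : x < z) => ?_
        rw [hright, setIntegral_indicator measurableSet_Iio, Ioi_inter_Iio, integral_mul_const,
          intervalIntegral.integral_of_le hz.le, integral_Ioc_eq_integral_Ioo, mul_comm]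

lemma integral_mul_tailIntegral_pow (hh : IntegrableOn h (Ioi x)) (n : ℕ) :
    ∫ y in Ioi x, h y * tailIntegral h y ^ n = tailIntegral h x ^ (n + 1) / (n + 1) := by
  induction n generalizing x with
  | zero => simp [tailIntegral]
  | succ n ih =>
    set I := ∫ y in Ioi x, h y * tailIntegral h y ^ (n + 1)
    have hpow := integrableOn_mul_comp_tailIntegral hh (continuous_pow n)
    have hpow' := integrableOn_mul_comp_tailIntegral hh (continuous_pow (n + 1))
    have hinterval : ∀ z, x ≤ z → ∫ y in x..z, h y * tailIntegral h y ^ n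
        = tailIntegral h x ^ (n + 1) / (n + 1) - tailIntegral h z ^ (n + 1) / (n + 1) := by
      intro z hz
      rw [← intervalIntegral.integral_Ioi_sub_Ioi hpow hz, ih hh,
        ih (hh.mono_set (Ioi_subset_Ioi hz))]
    -- Fubini turns `I` into an expression in `I` itself, which can then be solved for.
    have hI : I = tailIntegral h x ^ (n + 1) / (n + 1) * tailIntegral h x - I / (n + 1) := by
      calc I = ∫ y in Ioi x, (h y * tailIntegral h y ^ n) * tailIntegral h y := by
            simp only [I, pow_succ, mul_assoc]
        _ = ∫ z in Ioi x, h z * ∫ y in x..z, h y * tailIntegral h y ^ n :=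
            integral_mul_tailIntegral hpow hh
        _ = ∫ z in Ioi x, (tailIntegral h x ^ (n + 1) / (n + 1) * h z
              - (h z * tailIntegral h z ^ (n + 1)) / (n + 1)) := by
            refine setIntegral_congr_fun measurableSet_Ioi fun z (hz : x < z) => ?_
            rw [hinterval z hz.le]; ring
        _ = _ := by
            rw [integral_sub (hh.const_mul _) (hpow'.div_const _), integral_const_mul,
              integral_div]; rfl
    push_cast
    field_simp at hI ⊢
    linear_combination hI

lemma integral_mul_tailIntegral_pow_div_factorial (hh : IntegrableOn h (Ioi x)) (n : ℕ) :
    ∫ y in Ioi x, h y * (tailIntegral h y ^ n / n !) = tailIntegral h x ^ (n + 1) / (n + 1)! := by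
  simp_rw [← mul_div_assoc]
  rw [integral_div, integral_mul_tailIntegral_pow hh, Nat.factorial_succ, Nat.cast_mul,
    div_div, Nat.cast_succ]

lemma integral_mul_exp_tailIntegral (hh0 : ∀ y, 0 ≤ h y) (hh : IntegrableOn h (Ioi x)) :
    ∫ y in Ioi x, h y * Real.exp (tailIntegral h y) = Real.exp (tailIntegral h x) - 1 := by
  have hterm := integral_mul_tailIntegral_pow_div_factorial hh
  have hint : ∀ n : ℕ, IntegrableOn (fun y => h y * (tailIntegral h y ^ n / n !)) (Ioi x) :=
    fun n => integrableOn_mul_comp_tailIntegral hh ((continuous_pow n).div_const _)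
  have hexp : ∀ t : ℝ, HasSum (fun n => t ^ n / n !) (Real.exp t) := by
    rw [Real.exp_eq_exp_ℝ]; exact NormedSpace.expSeries_div_hasSum_exp
  have hnonneg : ∀ n y, 0 ≤ h y * (tailIntegral h y ^ n / n !) := fun n y =>
    mul_nonneg (hh0 y) (div_nonneg (pow_nonneg (setIntegral_nonneg measurableSet_Ioi
      fun z _ => hh0 z) n) (Nat.cast_nonneg _))
  have hsum : HasSum (fun n => ∫ y in Ioi x, h y * (tailIntegral h y ^ n / n !))
      (∫ y in Ioi x, h y * Real.exp (tailIntegral h y)) := by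
    have hnorm : Summable fun n => ∫ y in Ioi x, ‖h y * (tailIntegral h y ^ n / n !)‖ := by
      simp_rw [Real.norm_of_nonneg (hnonneg _ _), hterm]
      exact (summable_nat_add_iff 1).mpr (hexp _).summable
    rw [setIntegral_congr_fun measurableSet_Ioi fun y _ =>
      ((hexp (tailIntegral h y)).mul_left (h y)).tsum_eq.symm]
    exact hasSum_integral_of_summable_integral_norm hint hnorm
  simp_rw [hterm] at hsum
  simpa using hsum.unique ((hasSum_nat_add_iff' 1).mpr (hexp (tailIntegral h x)))

variable {a : ℝ}

lemma nonpos_of_le_integral_mul {v : ℝ → ℝ} {C : ℝ} (hh0 : ∀ y, 0 ≤ h y)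
    (hh : IntegrableOn h (Ioi a)) (hhv : IntegrableOn (fun y => h y * v y) (Ioi a))
    (hC : ∀ x, a ≤ x → v x ≤ C) (hv : ∀ x, a ≤ x → v x ≤ ∫ y in Ioi x, h y * v y) :
    ∀ x, a ≤ x → v x ≤ 0 := by
  have hiter : ∀ n : ℕ, ∀ x, a ≤ x → v x ≤ C * (tailIntegral h x ^ n / n !) := by
    intro n
    induction n with
    | zero => simpa using hC
    | succ n ih =>
      intro x hx
      have hhx := hh.mono_set (Ioi_subset_Ioi hx)
      calc v x ≤ ∫ y in Ioi x, h y * v y := hv x hx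
        _ ≤ ∫ y in Ioi x, C * (h y * (tailIntegral h y ^ n / n !)) := by
          refine setIntegral_mono_on (hhv.mono_set (Ioi_subset_Ioi hx))
            ((integrableOn_mul_comp_tailIntegral hhx ((continuous_pow n).div_const _)).const_mul C)
            measurableSet_Ioi fun y (hy : x < y) => ?_
          rw [mul_left_comm]
          exact mul_le_mul_of_nonneg_left (ih y (hx.trans hy.le)) (hh0 y)
        _ = C * (tailIntegral h x ^ (n + 1) / (n + 1)!) := by
          rw [integral_const_mul, integral_mul_tailIntegral_pow_div_factorial hhx]
  intro x hx
  have hlim := (FloorSemiring.tendsto_pow_div_factorial_atTop (tailIntegral h x)).const_mul C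
  rw [mul_zero] at hlim
  exact ge_of_tendsto' hlim fun n => hiter n x hx

lemma le_mul_exp_tailIntegral_of_le_add_integral {u : ℝ → ℝ} {A B : ℝ} (hh0 : ∀ y, 0 ≤ h y)
    (hh : IntegrableOn h (Ioi a)) (hhu : IntegrableOn (fun y => h y * u y) (Ioi a))
    (hB : ∀ x, a ≤ x → u x ≤ B) (hu : ∀ x, a ≤ x → u x ≤ A + ∫ y in Ioi x, h y * u y) :
    ∀ x, a ≤ x → u x ≤ A * Real.exp (tailIntegral h x) := by
  set v := fun x => u x - A * Real.exp (tailIntegral h x)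
  have hhe := integrableOn_mul_comp_tailIntegral hh Real.continuous_exp
  have hhv : IntegrableOn (fun y => h y * v y) (Ioi a) := by
    simpa only [v, mul_sub, mul_left_comm] using
      (hhu.sub (hhe.const_mul A) : IntegrableOn (fun y => h y * u y - _) (Ioi a))
  have hv : ∀ x, a ≤ x → v x ≤ ∫ y in Ioi x, h y * v y := by
    intro x hx
    have hhx := hh.mono_set (Ioi_subset_Ioi hx)
    have hsplit : ∫ y in Ioi x, h y * v y
        = (∫ y in Ioi x, h y * u y) - A * (Real.exp (tailIntegral h x) - 1) := by
      simp only [v, mul_sub, mul_left_comm _ A]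
      rw [integral_sub (hhu.mono_set (Ioi_subset_Ioi hx))
        ((hhe.mono_set (Ioi_subset_Ioi hx)).const_mul A), integral_const_mul,
        integral_mul_exp_tailIntegral hh0 hhx, mul_sub, mul_one]
    rw [hsplit]
    linarith [hu x hx]
  have hC : ∀ x, a ≤ x → v x ≤ B + |A| * Real.exp (∫ z in Ioi a, |h z|) := by
    intro x hx
    have hA : -(A * Real.exp (tailIntegral h x)) ≤ |A| * Real.exp (∫ z in Ioi a, |h z|) :=
      (neg_le_abs _).trans <| by
        rw [abs_mul, Real.abs_exp]
        gcongr
        exact (le_abs_self _).trans (abs_tailIntegral_le hh hx)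
    linarith [hB x hx]
  intro x hx
  linarith [nonpos_of_le_integral_mul hh0 hh hhv hC hv x hx]

end

/-- Backward Gronwall estimate for a Volterra integral equation on a half-line:
if `ψ(x) = g(x) + ∫ₓ^∞ K(x,y) ψ(y) dy` for `x ≥ x₀`, with `|g| ≤ A`,
`|K(x,y)| ≤ h(y)` for `x₀ ≤ x ≤ y`, `h ≥ 0` integrable on `[x₀,∞)`, and `ψ`
bounded and measurable, then `|ψ(x)| ≤ A · exp(∫ₓ^∞ h)` for all `x ≥ x₀`. -/
theorem volterra_gronwall (x₀ A : ℝ) (ψ g : ℝ → ℂ) (K : ℝ → ℝ → ℂ) (h : ℝ → ℝ)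
    (hh_nonneg : ∀ y, 0 ≤ h y)
    (hh_int : IntegrableOn h (Set.Ici x₀))
    (hg : ∀ x, x₀ ≤ x → ‖g x‖ ≤ A)
    (hK : ∀ x y, x₀ ≤ x → x ≤ y → ‖K x y‖ ≤ h y)
    (hψ_meas : Measurable ψ)
    (hψ_bdd : ∃ B, ∀ x, ‖ψ x‖ ≤ B)
    (heq : ∀ x, x₀ ≤ x → ψ x = g x + ∫ y in Set.Ioi x, K x y * ψ y) :
    ∀ x, x₀ ≤ x → ‖ψ x‖ ≤ A * Real.exp (∫ y in Set.Ioi x, h y) := by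
  obtain ⟨B, hB⟩ := hψ_bdd
  have hh : IntegrableOn h (Ioi x₀) := hh_int.mono_set Ioi_subset_Ici_self
  have hhψ : IntegrableOn (fun y => h y * ‖ψ y‖) (Ioi x₀) :=
    hh.mul_bdd hψ_meas.norm.aestronglyMeasurable (ae_of_all _ fun y => by simpa using hB y)
  refine le_mul_exp_tailIntegral_of_le_add_integral hh_nonneg hh hhψ (fun x _ => hB x)
    fun x hx => ?_
  have hKψ : ‖∫ y in Ioi x, K x y * ψ y‖ ≤ ∫ y in Ioi x, h y * ‖ψ y‖ := by
    refine (norm_integral_le_integral_norm _).trans <| integral_mono_of_nonneg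
      (ae_of_all _ fun _ => norm_nonneg _) (hhψ.mono_set (Ioi_subset_Ioi hx)) ?_
    filter_upwards [ae_restrict_mem measurableSet_Ioi] with y (hy : x < y)
    rw [norm_mul]
    exact mul_le_mul_of_nonneg_right (hK x y hx hy.le) (norm_nonneg _)
  rw [heq x hx]
  exact (norm_add_le _ _).trans (add_le_add (hg x hx) hKψ)
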